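/- Let Γ=(G,σ) be a weighted signed graph and μ a measure on V. For any nonzero function f : V → ℝ there exists t' ∈ [0, max_{u∈V} |f(u)|] such that β^σ(V_f(t'), V_f(−t')) ≤ (½ Σ_{u,v∈V} w(u,v)|f(u) − σ(u,v)f(v)|)/(Σ_u μ(u)|f(u)|), where for t > 0, V_f(t) = {u : f(u) ≥ t} and V_f(−t) = {u : f(u) ≤ −t}, while V_f(0) = {u : f(u) ≥ 0} and V_f(−0) = {u : f(u) < 0}. -/

import Mathlib

/-!
For disjoint `V₁, V₂`, `β^σ(V₁, V₂)` is the ℓ¹ Rayleigh quotient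
`½ Σ w(u,v) |x(u) − σ(u,v) x(v)| / Σ μ(u) |x(u)|` of the signed indicator `x = 1_{V₁} − 1_{V₂}`.
Thresholding `f` at `t > 0` gives `x_t(u) = 1[t ≤ f(u)] − 1[t ≤ −f(u)]`; as `a ↦ x_t(a)` is odd and
monotone, `∫₀^M |x_t(a) − x_t(b)| dt = |a − b|` whenever `|a|, |b| ≤ M`. With `M = max |f|`, the
numerator and the denominator of the quotient of `x_t` integrate over `(0, M)` to those of `f`, so
for some `t ∈ (0, M)` the numerator is at most `R` times the denominator, `R` the quotient of `f`.
-/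

open Finset Real

open scoped Classical

noncomputable section

namespace SignedGraph

variable {N : ℕ}

/-- The degree `d(u) = Σ_v w(u,v)` of a vertex. -/
def deg (w : Fin N → Fin N → ℝ) (u : Fin N) : ℝ := ∑ v, w u v

/-- Hypotheses making `(w, sgn)` a weighted signed graph: `w` is a symmetric nonnegative
weight function vanishing on the diagonal and `sgn` is a symmetric `±1`-valued signature. -/
structure IsWSG {N : ℕ} (w : Fin N → Fin N → ℝ) (sgn : Fin N → Fin N → ℝ) : Prop where
  w_symm : ∀ u v, w u v = w v u
  w_nonneg : ∀ u v, 0 ≤ w u v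
  w_loopless : ∀ u, w u u = 0
  sgn_symm : ∀ u v, sgn u v = sgn v u
  sgn_pm : ∀ u v, sgn u v = 1 ∨ sgn u v = -1

/-- The signature obtained from `sgn` by switching with the function `θ : V → {±1}`. -/
def switchSgn (sgn : Fin N → Fin N → ℝ) (θ : Fin N → ℝ) : Fin N → Fin N → ℝ :=
  fun u v => θ u * sgn u v * θ v

/-- `|E(S,T)| = Σ_{u∈S, v∈T} w(u,v)`. -/
def EE (w : Fin N → Fin N → ℝ) (S T : Finset (Fin N)) : ℝ := ∑ u ∈ S, ∑ v ∈ T, w u v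

/-- `|E⁺(S,T)|`: total weight of positive edges from `S` to `T`. -/
def Epos (w sgn : Fin N → Fin N → ℝ) (S T : Finset (Fin N)) : ℝ :=
  ∑ u ∈ S, ∑ v ∈ T, if sgn u v = 1 then w u v else 0

/-- `|E⁻(S,T)|`: total weight of negative edges from `S` to `T`. -/
def Eneg (w sgn : Fin N → Fin N → ℝ) (S T : Finset (Fin N)) : ℝ :=
  ∑ u ∈ S, ∑ v ∈ T, if sgn u v = -1 then w u v else 0

/-- `vol_μ(S) = Σ_{u∈S} μ(u)`. -/
def vol (μ : Fin N → ℝ) (S : Finset (Fin N)) : ℝ := ∑ u ∈ S, μ u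

/-- The signed bipartiteness ratio `β^σ(V₁,V₂)`. -/
def betaR (w sgn : Fin N → Fin N → ℝ) (μ : Fin N → ℝ) (V1 V2 : Finset (Fin N)) : ℝ :=
  (2 * Epos w sgn V1 V2 + Eneg w sgn V1 V1 + Eneg w sgn V2 V2 +
      EE w (V1 ∪ V2) (V1 ∪ V2)ᶜ) / vol μ (V1 ∪ V2)

/-- The signed Cheeger constant `h₁^σ(μ)`: the minimum of `β^σ(V₁,V₂)` over all pairs of
disjoint subsets with nonempty union. -/
def h1 (w sgn : Fin N → Fin N → ℝ) (μ : Fin N → ℝ) : ℝ :=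
  sInf {x | ∃ V1 V2 : Finset (Fin N),
    Disjoint V1 V2 ∧ (V1 ∪ V2).Nonempty ∧ x = betaR w sgn μ V1 V2}

/-- The upper threshold set `V_f(t) = {u : f(u) ≥ t}` (for `t = 0` this is `{u : f(u) ≥ 0}`). -/
def Vp (f : Fin N → ℝ) (t : ℝ) : Finset (Fin N) :=
  Finset.univ.filter (fun u => t ≤ f u)

/-- The lower threshold set `V_f(−t) = {u : f(u) ≤ −t}` for `t > 0`, with the special
definition `V_f(−0) = {u : f(u) < 0}`. -/
def Vm (f : Fin N → ℝ) (t : ℝ) : Finset (Fin N) :=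
  if t = 0 then Finset.univ.filter (fun u => f u < 0)
  else Finset.univ.filter (fun u => f u ≤ -t)

open MeasureTheory

def levelSign (a t : ℝ) : ℝ := (Set.Iic a).indicator 1 t - (Set.Iic (-a)).indicator 1 t

lemma levelSign_neg (a t : ℝ) : levelSign (-a) t = -levelSign a t := by
  simp only [levelSign, neg_neg, neg_sub]

lemma levelSign_zero (t : ℝ) : levelSign 0 t = 0 := by
  simp [levelSign]

lemma levelSign_mono (t : ℝ) : Monotone fun a => levelSign a t := fun _ _ hab =>
  sub_le_sub
    (Set.indicator_le_indicator_of_subset (Set.Iic_subset_Iic.2 hab) zero_le_one t)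
    (Set.indicator_le_indicator_of_subset (Set.Iic_subset_Iic.2 (neg_le_neg hab)) zero_le_one t)

lemma levelSign_ne_zero {a t : ℝ} (ht : 0 < t) (hta : t ≤ |a|) : levelSign a t ≠ 0 := by
  rcases le_abs'.1 hta with h | h
  · have : ¬ t ≤ a := by linarith
    have h' : t ≤ -a := by linarith
    simp [levelSign, h', this]
  · have : ¬ t ≤ -a := by linarith
    simp [levelSign, h, this]

lemma antitone_indicator_Iic_one (b : ℝ) : Antitone ((Set.Iic b).indicator (1 : ℝ → ℝ)) :=
  fun s _ hst => Set.indicator_apply_le'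
    (fun ht => (Set.indicator_of_mem (show s ∈ Set.Iic b from hst.trans ht) 1).ge)
    (fun _ => Set.indicator_nonneg (fun _ _ => zero_le_one) s)

lemma intervalIntegrable_levelSign (a c d : ℝ) : IntervalIntegrable (levelSign a) volume c d :=
  (antitone_indicator_Iic_one a).intervalIntegrable.sub
    (antitone_indicator_Iic_one (-a)).intervalIntegrable

lemma integral_indicator_Iic_one {a M : ℝ} (hM : 0 ≤ M) (haM : a ≤ M) :
    ∫ t in 0..M, (Set.Iic a).indicator 1 t = max a 0 := by
  rcases le_or_gt 0 a with ha | ha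
  · rw [max_eq_left ha]
    exact (intervalIntegral.integral_indicator (f := 1) (μ := volume) ⟨ha, haM⟩).trans (by simp)
  · rw [max_eq_right ha.le, intervalIntegral.integral_congr (g := fun _ => (0 : ℝ)) fun t ht => ?_,
      intervalIntegral.integral_zero]
    have ht0 : 0 ≤ t := (Set.uIcc_of_le hM ▸ ht).1
    exact Set.indicator_of_notMem (fun hta : t ≤ a => by linarith) (1 : ℝ → ℝ)

lemma integral_levelSign {a M : ℝ} (haM : |a| ≤ M) : ∫ t in 0..M, levelSign a t = a := by
  have hM : 0 ≤ M := (abs_nonneg a).trans haM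
  unfold levelSign
  obtain ⟨haM', hnegaM⟩ := abs_le'.1 haM
  rw [intervalIntegral.integral_sub
      (antitone_indicator_Iic_one a).intervalIntegrable
      (antitone_indicator_Iic_one (-a)).intervalIntegrable,
    integral_indicator_Iic_one hM haM',
    integral_indicator_Iic_one hM hnegaM]
  rcases le_total 0 a with ha | ha <;> simp [ha]

lemma integral_abs_levelSign_sub {a b M : ℝ} (haM : |a| ≤ M) (hbM : |b| ≤ M) :
    ∫ t in 0..M, |levelSign a t - levelSign b t| = |a - b| := by
  wlog hab : a ≤ b generalizing a b
  · simpa only [abs_sub_comm] using this hbM haM (le_of_not_ge hab)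
  have hpointwise : ∀ t, |levelSign a t - levelSign b t| = levelSign b t - levelSign a t :=
    fun t => by rw [abs_sub_comm, abs_of_nonneg (sub_nonneg.2 (levelSign_mono t hab))]
  simp_rw [hpointwise]
  rw [intervalIntegral.integral_sub (intervalIntegrable_levelSign b 0 M)
      (intervalIntegrable_levelSign a 0 M), integral_levelSign haM, integral_levelSign hbM,
    abs_sub_comm, abs_of_nonneg (sub_nonneg.2 hab)]

lemma integral_abs_levelSign {a M : ℝ} (haM : |a| ≤ M) : ∫ t in 0..M, |levelSign a t| = |a| := by
  simpa [levelSign_zero] using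
    integral_abs_levelSign_sub haM (b := 0) (by simpa using (abs_nonneg a).trans haM)

lemma mul_levelSign_of_eq_one_or_eq_neg_one {s : ℝ} (hs : s = 1 ∨ s = -1) (a t : ℝ) :
    s * levelSign a t = levelSign (s * a) t := by
  rcases hs with rfl | rfl
  · simp
  · simp [levelSign_neg]

lemma intervalIntegrable_fun_sum {ι : Type*} (s : Finset ι) {g : ι → ℝ → ℝ} {c d : ℝ}
    (h : ∀ i ∈ s, IntervalIntegrable (g i) volume c d) :
    IntervalIntegrable (fun t => ∑ i ∈ s, g i t) volume c d := by
  simpa only [Finset.sum_fn] using IntervalIntegrable.sum s h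

def signedVariation (w sgn : Fin N → Fin N → ℝ) (x : Fin N → ℝ) : ℝ :=
  (1 : ℝ) / 2 * ∑ u, ∑ v, w u v * |x u - sgn u v * x v|

def weightedL1 (μ x : Fin N → ℝ) : ℝ := ∑ u, μ u * |x u|

lemma weightedL1_pos {μ x : Fin N → ℝ} (hμ : ∀ u, 0 < μ u) {u : Fin N} (hxu : x u ≠ 0) :
    0 < weightedL1 μ x :=
  Finset.sum_pos' (fun v _ => mul_nonneg (hμ v).le (abs_nonneg _))
    ⟨u, Finset.mem_univ u, mul_pos (hμ u) (abs_pos.2 hxu)⟩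

section Coarea

variable {w sgn : Fin N → Fin N → ℝ} {μ f : Fin N → ℝ}

lemma signedVariation_levelSign (hsgn : ∀ u v, sgn u v = 1 ∨ sgn u v = -1) (t : ℝ) :
    signedVariation w sgn (fun u => levelSign (f u) t) =
      (1 : ℝ) / 2 * ∑ u, ∑ v, w u v * |levelSign (f u) t - levelSign (sgn u v * f v) t| := by
  simp only [signedVariation, mul_levelSign_of_eq_one_or_eq_neg_one (hsgn _ _)]

lemma intervalIntegrable_signedVariation_levelSign (hsgn : ∀ u v, sgn u v = 1 ∨ sgn u v = -1)
    (c d : ℝ) :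
    IntervalIntegrable (fun t => signedVariation w sgn fun u => levelSign (f u) t) volume c d := by
  simp only [signedVariation_levelSign hsgn]
  refine .const_mul (intervalIntegrable_fun_sum _ fun u _ => intervalIntegrable_fun_sum _
    fun v _ => .const_mul ?_ _) _
  exact ((intervalIntegrable_levelSign _ c d).sub (intervalIntegrable_levelSign _ c d)).abs

lemma intervalIntegrable_weightedL1_levelSign (c d : ℝ) :
    IntervalIntegrable (fun t => weightedL1 μ (fun u => levelSign (f u) t)) volume c d :=
  intervalIntegrable_fun_sum _ fun _ _ => .const_mul (intervalIntegrable_levelSign _ c d).abs _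

lemma integral_signedVariation_levelSign (hsgn : ∀ u v, sgn u v = 1 ∨ sgn u v = -1) {M : ℝ}
    (hfM : ∀ u, |f u| ≤ M) :
    ∫ t in 0..M, signedVariation w sgn (fun u => levelSign (f u) t) = signedVariation w sgn f := by
  have hpair (u v : Fin N) : |sgn u v * f v| ≤ M := by
    rcases hsgn u v with h | h <;> simp [h, hfM]
  have hintegrable (u v : Fin N) : IntervalIntegrable
      (fun t => w u v * |levelSign (f u) t - levelSign (sgn u v * f v) t|) volume 0 M :=
    .const_mul (((intervalIntegrable_levelSign _ 0 M).sub
      (intervalIntegrable_levelSign _ 0 M)).abs) _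
  simp only [signedVariation_levelSign hsgn]
  rw [intervalIntegral.integral_const_mul, intervalIntegral.integral_finsetSum
    fun u _ => intervalIntegrable_fun_sum _ fun v _ => hintegrable u v]
  refine congrArg _ (Finset.sum_congr rfl fun u _ => ?_)
  rw [intervalIntegral.integral_finsetSum fun v _ => hintegrable u v]
  refine Finset.sum_congr rfl fun v _ => ?_
  rw [intervalIntegral.integral_const_mul, integral_abs_levelSign_sub (hfM u) (hpair u v)]

lemma integral_weightedL1_levelSign {M : ℝ} (hfM : ∀ u, |f u| ≤ M) :
    ∫ t in 0..M, weightedL1 μ (fun u => levelSign (f u) t) = weightedL1 μ f := by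
  simp only [weightedL1]
  rw [intervalIntegral.integral_finsetSum
    fun _ _ => .const_mul (intervalIntegrable_levelSign _ 0 M).abs _]
  refine Finset.sum_congr rfl fun u _ => ?_
  rw [intervalIntegral.integral_const_mul, integral_abs_levelSign (hfM u)]

end Coarea

lemma sum_sum_eq_sum_sum_ite (S T : Finset (Fin N)) (g : Fin N → Fin N → ℝ) :
    ∑ u ∈ S, ∑ v ∈ T, g u v = ∑ u, ∑ v, if u ∈ S ∧ v ∈ T then g u v else 0 := by
  simp [ite_and, Finset.sum_ite_mem]

lemma sum_sum_eq_half_sum_sum_add_swap (F : Fin N → Fin N → ℝ) :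
    ∑ u, ∑ v, F u v = 1 / 2 * ∑ u, ∑ v, (F u v + F v u) := by
  simp only [Finset.sum_add_distrib]
  rw [Finset.sum_comm (f := fun u v => F v u)]
  ring

def signedIndicator (V1 V2 : Finset (Fin N)) (u : Fin N) : ℝ :=
  (if u ∈ V1 then 1 else 0) - (if u ∈ V2 then 1 else 0)

section Representation

variable {w sgn : Fin N → Fin N → ℝ} {V1 V2 : Finset (Fin N)}

lemma mem_trichotomy_of_disjoint (hV : Disjoint V1 V2) (a : Fin N) :
    a ∈ V1 ∧ a ∉ V2 ∨ a ∉ V1 ∧ a ∈ V2 ∨ a ∉ V1 ∧ a ∉ V2 := by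
  by_cases h1 : a ∈ V1
  · exact .inl ⟨h1, Finset.disjoint_left.1 hV h1⟩
  · by_cases h2 : a ∈ V2 <;> simp [h1, h2]

lemma cutNumerator_eq_signedVariation (hG : IsWSG w sgn) (hV : Disjoint V1 V2) :
    2 * Epos w sgn V1 V2 + Eneg w sgn V1 V1 + Eneg w sgn V2 V2 + EE w (V1 ∪ V2) (V1 ∪ V2)ᶜ =
      signedVariation w sgn (signedIndicator V1 V2) := by
  set F : Fin N → Fin N → ℝ := fun u v =>
    2 * (if u ∈ V1 ∧ v ∈ V2 then (if sgn u v = 1 then w u v else 0) else 0) +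
      (if u ∈ V1 ∧ v ∈ V1 then (if sgn u v = -1 then w u v else 0) else 0) +
      (if u ∈ V2 ∧ v ∈ V2 then (if sgn u v = -1 then w u v else 0) else 0) +
      (if u ∈ V1 ∪ V2 ∧ v ∈ (V1 ∪ V2)ᶜ then w u v else 0) with hF
  have hsum : 2 * Epos w sgn V1 V2 + Eneg w sgn V1 V1 + Eneg w sgn V2 V2 +
      EE w (V1 ∪ V2) (V1 ∪ V2)ᶜ = ∑ u, ∑ v, F u v := by
    rw [Epos, Eneg, Eneg, EE, sum_sum_eq_sum_sum_ite V1 V2, sum_sum_eq_sum_sum_ite V1 V1,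
      sum_sum_eq_sum_sum_ite V2 V2, sum_sum_eq_sum_sum_ite (V1 ∪ V2)]
    simp only [hF, Finset.mul_sum, ← Finset.sum_add_distrib]
  have hpair (u v : Fin N) :
      F u v + F v u = w u v * |signedIndicator V1 V2 u - sgn u v * signedIndicator V1 V2 v| := by
    simp only [hF, signedIndicator, hG.w_symm v u, hG.sgn_symm v u]
    rcases hG.sgn_pm u v with hs | hs <;>
      rcases mem_trichotomy_of_disjoint hV u with ⟨hu1, hu2⟩ | ⟨hu1, hu2⟩ | ⟨hu1, hu2⟩ <;>
      rcases mem_trichotomy_of_disjoint hV v with ⟨hv1, hv2⟩ | ⟨hv1, hv2⟩ | ⟨hv1, hv2⟩ <;>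
      norm_num [*] <;> ring
  rw [hsum, sum_sum_eq_half_sum_sum_add_swap]
  simp only [hpair, signedVariation]

lemma vol_union_eq_weightedL1 (μ : Fin N → ℝ) (hV : Disjoint V1 V2) :
    vol μ (V1 ∪ V2) = weightedL1 μ (signedIndicator V1 V2) := by
  rw [vol, weightedL1, ← Finset.univ_inter (V1 ∪ V2), ← Finset.sum_ite_mem]
  refine Finset.sum_congr rfl fun u _ => ?_
  rcases mem_trichotomy_of_disjoint hV u with ⟨h1, h2⟩ | ⟨h1, h2⟩ | ⟨h1, h2⟩ <;>
    simp [signedIndicator, h1, h2]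

lemma betaR_eq_div (hG : IsWSG w sgn) (μ : Fin N → ℝ) (hV : Disjoint V1 V2) :
    betaR w sgn μ V1 V2 =
      signedVariation w sgn (signedIndicator V1 V2) / weightedL1 μ (signedIndicator V1 V2) := by
  rw [betaR, cutNumerator_eq_signedVariation hG hV, vol_union_eq_weightedL1 μ hV]

end Representation

lemma disjoint_Vp_Vm (f : Fin N → ℝ) {t : ℝ} (ht : 0 ≤ t) : Disjoint (Vp f t) (Vm f t) := by
  rw [Finset.disjoint_left]
  intro u hp hm
  unfold Vm at hm
  split_ifs at hm with h <;>
    simp only [Vp, Finset.mem_filter, Finset.mem_univ, true_and] at hp hm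
  · linarith
  · linarith [lt_of_le_of_ne ht (Ne.symm h)]

lemma signedIndicator_Vp_Vm (f : Fin N → ℝ) {t : ℝ} (ht : 0 < t) :
    signedIndicator (Vp f t) (Vm f t) = fun u => levelSign (f u) t := by
  ext u
  simp [signedIndicator, Vp, Vm, ht.ne', levelSign, Set.indicator_apply, le_neg]

lemma exists_le_mul_of_integral_le_mul {F G : ℝ → ℝ} {a b r : ℝ}
    (hF : IntervalIntegrable F volume a b) (hG : IntervalIntegrable G volume a b) (hab : a < b)
    (h : ∫ t in a..b, F t ≤ r * ∫ t in a..b, G t) : ∃ t ∈ Set.Ioo a b, F t ≤ r * G t := by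
  by_contra! hlt
  have hpos : 0 < ∫ t in a..b, (F t - r * G t) :=
    intervalIntegral.intervalIntegral_pos_of_pos_on (hF.sub (hG.const_mul r))
      (fun t ht => sub_pos.2 (hlt t ht)) hab
  rw [intervalIntegral.integral_sub hF (hG.const_mul r), intervalIntegral.integral_const_mul]
    at hpos
  linarith

theorem l1_threshold_lemma_general {N : ℕ} (w sgn : Fin N → Fin N → ℝ)
    (hG : IsWSG w sgn) (μ : Fin N → ℝ) (hμ : ∀ u, 0 < μ u)
    (f : Fin N → ℝ) (hf : f ≠ 0) :
    ∃ t' ∈ Set.Icc (0 : ℝ) (⨆ u, |f u|),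
      betaR w sgn μ (Vp f t') (Vm f t') ≤
        ((1 : ℝ) / 2 * ∑ u, ∑ v, w u v * |f u - sgn u v * f v|) /
          (∑ u, μ u * |f u|) := by
  obtain ⟨u₀, hu₀⟩ := Function.ne_iff.1 hf
  have : Nonempty (Fin N) := ⟨u₀⟩
  obtain ⟨umax, humax⟩ := exists_eq_ciSup_of_finite (f := fun u => |f u|)
  set M := ⨆ u, |f u|
  have hfM (u : Fin N) : |f u| ≤ M := le_ciSup (f := fun u => |f u|) (Finite.bddAbove_range _) u
  have hM : 0 < M := (abs_pos.2 hu₀).trans_le (hfM u₀)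
  have hL1 : 0 < weightedL1 μ f := weightedL1_pos hμ hu₀
  obtain ⟨t, ⟨ht0, htM⟩, hle⟩ := exists_le_mul_of_integral_le_mul
    (intervalIntegrable_signedVariation_levelSign hG.sgn_pm 0 M)
    (intervalIntegrable_weightedL1_levelSign 0 M) hM
    (r := signedVariation w sgn f / weightedL1 μ f) <| by
      rw [integral_signedVariation_levelSign hG.sgn_pm hfM, integral_weightedL1_levelSign hfM,
        div_mul_cancel₀ _ hL1.ne']
  have hpos : 0 < weightedL1 μ fun u => levelSign (f u) t :=
    weightedL1_pos hμ (u := umax) (levelSign_ne_zero ht0 (humax ▸ htM.le))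
  refine ⟨t, ⟨ht0.le, htM.le⟩, ?_⟩
  rwa [betaR_eq_div hG μ (disjoint_Vp_Vm f ht0.le), signedIndicator_Vp_Vm f ht0,
    div_le_iff₀ hpos]

/-- For any nonzero `f : V → ℝ` there is `t' ∈ [0, max_u |f(u)|]` with
`β^σ(V_f(t'), V_f(−t')) ≤ (½ Σ_{u,v} w(u,v)|f(u) − σ(u,v)f(v)|)/(Σ_u μ(u)|f(u)|)`. -/
theorem l1_threshold_lemma {N : ℕ} (hN : 0 < N) (w sgn : Fin N → Fin N → ℝ)
    (hG : IsWSG w sgn) (μ : Fin N → ℝ) (hμ : ∀ u, 0 < μ u)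
    (f : Fin N → ℝ) (hf : f ≠ 0) :
    ∃ t' ∈ Set.Icc (0 : ℝ) (⨆ u, |f u|),
      betaR w sgn μ (Vp f t') (Vm f t') ≤
        ((1 : ℝ) / 2 * ∑ u, ∑ v, w u v * |f u - sgn u v * f v|) /
          (∑ u, μ u * |f u|) :=
  l1_threshold_lemma_general w sgn hG μ hμ f hf

end SignedGraph
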